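/- If Γ ⊆ ℝⁿ is an n-set, then the set difference of its closure and Γ itself, closure(Γ) \ Γ, has zero Lebesgue measure. -/

import Mathlib

/-!
By the Lebesgue density theorem, almost every point outside `Γ` has density `0` with respect
to `Γ`. A point of `closure Γ` has a point `y ∈ Γ` within `r / 2`, so the ball of radius `r`
around it contains `Γ ∩ B(y, r / 2)`, of measure at least `c (r / 2)ⁿ`: its density is bounded
below by a positive constant. Hence `closure Γ \ Γ` is null.
-/

open Set Metric MeasureTheory

/-- `Γ ⊆ ℝⁿ` is an `n`-set: it is Borel measurable and there is `c > 0` such that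
`m(Γ ∩ B(x,r)) ≥ c rⁿ` for all `x ∈ Γ` and `0 < r ≤ 1`. -/
def IsNSet {n : ℕ} (Γ : Set (EuclideanSpace ℝ (Fin n))) : Prop :=
  MeasurableSet Γ ∧ ∃ c > (0:ℝ), ∀ x ∈ Γ, ∀ r : ℝ, 0 < r → r ≤ 1 →
    ENNReal.ofReal (c * r ^ n) ≤ volume (Γ ∩ ball x r)

open Filter Topology Module

namespace Besicovitch

variable {β : Type*} [MetricSpace β] [MeasurableSpace β] [BorelSpace β]
  [SecondCountableTopology β] [HasBesicovitchCovering β]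

theorem measure_eq_zero_of_eventually_le_density (μ : Measure β) [IsLocallyFiniteMeasure μ]
    {s t : Set β} (hs : MeasurableSet s) (hts : Disjoint t s) {ε : ENNReal} (hε : 0 < ε)
    (ht : ∀ x ∈ t, ∀ᶠ r in 𝓝[>] 0, ε ≤ μ (s ∩ closedBall x r) / μ (closedBall x r)) :
    μ t = 0 := by
  refine measure_mono_null (fun x hx => ?_)
    (ae_iff.1 (ae_tendsto_measure_inter_div_of_measurableSet μ hs))
  intro hlim
  rw [indicator_of_notMem (hts.notMem_of_mem_left hx)] at hlim
  exact hε.ne' (nonpos_iff_eq_zero.1 (ge_of_tendsto hlim (ht x hx)))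

end Besicovitch

theorem Metric.exists_mem_ball_half_subset_ball {α : Type*} [PseudoMetricSpace α] {s : Set α}
    {x : α} (hx : x ∈ closure s) {r : ℝ} (hr : 0 < r) : ∃ y ∈ s, ball y (r / 2) ⊆ ball x r := by
  obtain ⟨y, hy, hxy⟩ := Metric.mem_closure_iff.1 hx (r / 2) (half_pos hr)
  exact ⟨y, hy, ball_subset_ball' (by rw [dist_comm]; linarith)⟩

theorem eventually_le_measure_inter_closedBall_div_of_mem_closure {E : Type*}
    [NormedAddCommGroup E] [NormedSpace ℝ E] [FiniteDimensional ℝ E] [MeasurableSpace E]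
    [BorelSpace E] (μ : Measure E) [μ.IsAddHaarMeasure] {s : Set E} {c : ℝ}
    (hs : ∀ y ∈ s, ∀ r : ℝ, 0 < r → r ≤ 1 →
      ENNReal.ofReal (c * r ^ finrank ℝ E) ≤ μ (s ∩ ball y r))
    {x : E} (hx : x ∈ closure s) :
    ∀ᶠ r in 𝓝[>] 0, ENNReal.ofReal (c / 2 ^ finrank ℝ E) / μ (ball 0 1) ≤
      μ (s ∩ closedBall x r) / μ (closedBall x r) := by
  filter_upwards [Ioc_mem_nhdsGT zero_lt_one] with r ⟨hr, hr1⟩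
  obtain ⟨y, hy, hball⟩ := exists_mem_ball_half_subset_ball hx hr
  have hr_pow : ENNReal.ofReal (r ^ finrank ℝ E) ≠ 0 := (ENNReal.ofReal_pos.2 (by positivity)).ne'
  calc ENNReal.ofReal (c / 2 ^ finrank ℝ E) / μ (ball 0 1)
      = ENNReal.ofReal (c * (r / 2) ^ finrank ℝ E) / μ (closedBall x r) := by
        rw [Measure.addHaar_closedBall μ x hr.le, div_pow, mul_div_left_comm,
          ENNReal.ofReal_mul (by positivity),
          ENNReal.mul_div_mul_left _ _ hr_pow ENNReal.ofReal_ne_top]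
    _ ≤ μ (s ∩ closedBall x r) / μ (closedBall x r) := by
        gcongr
        calc ENNReal.ofReal (c * (r / 2) ^ finrank ℝ E) ≤ μ (s ∩ ball y (r / 2)) :=
              hs y hy _ (half_pos hr) (by linarith)
          _ ≤ μ (s ∩ closedBall x r) :=
              measure_mono (inter_subset_inter_right s (hball.trans ball_subset_closedBall))

/-- If `Γ ⊆ ℝⁿ` is an `n`-set, then `closure Γ \ Γ` has zero Lebesgue measure. -/
theorem isNSet_closure_diff_null {n : ℕ} (Γ : Set (EuclideanSpace ℝ (Fin n))) (h : IsNSet Γ) :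
    volume (closure Γ \ Γ) = 0 := by
  obtain ⟨hmeas, c, hc, hbound⟩ := h
  have hε : 0 < ENNReal.ofReal (c / 2 ^ n) / volume (ball (0 : EuclideanSpace ℝ (Fin n)) 1) :=
    ENNReal.div_pos (by positivity) measure_ball_lt_top.ne
  refine Besicovitch.measure_eq_zero_of_eventually_le_density volume hmeas disjoint_sdiff_left hε
    fun x hx => ?_
  simpa only [finrank_euclideanSpace_fin] using
    eventually_le_measure_inter_closedBall_div_of_mem_closure volume (hx := hx.1)
      (by simpa only [finrank_euclideanSpace_fin] using hbound)
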